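/- Let A be a pervasive uniform algebra on a compact Hausdorff space X (i.e., for every proper nonempty closed subset F ⊊ X, the restriction algebra A|F is dense in C(F)). If A is a proper subalgebra of C(X), then A is analytic: every f ∈ A that vanishes on some nonempty open subset of X is identically zero. -/

import Mathlib

open Set

variable {X : Type} [TopologicalSpace X] [CompactSpace X] [T2Space X]

/-- A uniform algebra `A` on `X` is pervasive if for every nonempty proper closed subset
`F` of `X`, the restrictions of elements of `A` to `F` are dense in `C(F, ℂ)`. -/
def Pervasive (A : Subalgebra ℂ C(X, ℂ)) : Prop :=
  ∀ F : Set X, IsClosed F → F.Nonempty → F ≠ Set.univ →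
    Dense ((fun f : C(X, ℂ) => f.restrict F) '' (A : Set C(X, ℂ)))

/-!
Let `J = {g | g • C(X) ⊆ A}` be the conductor of `A`, the largest ideal of `C(X)` inside `A`.
If `f ∈ A` vanishes on a nonempty open `U`, then `f * h` is uniformly approximated by `f * a`
where `a ∈ A` approximates `h` on `Uᶜ`; hence `f ∈ J`. So if `f ≠ 0`, the hull `E` of `J` is a
proper closed set. Since `A` is closed, it contains the closure of `J`, i.e. every function
vanishing on `E`. Now any `h` is approximated on `E` by some `a ∈ A`, and `h - a`, being small
on `E`, is uniformly close to a function vanishing on `E`; thus `A` is dense, so `A = C(X)`.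
-/

def Subalgebra.conductor {𝕜 R : Type*} [CommSemiring 𝕜] [CommSemiring R] [Algebra 𝕜 R]
    (A : Subalgebra 𝕜 R) : Ideal R where
  carrier := {g | ∀ h, g * h ∈ A}
  zero_mem' h := by simp only [zero_mul, zero_mem]
  add_mem' hg hg' h := by simpa only [add_mul] using add_mem (hg h) (hg' h)
  smul_mem' c g hg h := by simpa only [smul_eq_mul, mul_assoc, mul_left_comm] using hg (c * h)

theorem Subalgebra.conductor_subset {𝕜 R : Type*} [CommSemiring 𝕜] [CommSemiring R]
    [Algebra 𝕜 R] (A : Subalgebra 𝕜 R) : (A.conductor : Set R) ⊆ A := fun g hg => by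
  simpa only [mul_one, SetLike.mem_coe] using hg 1

theorem Subalgebra.idealOfSet_setOfIdeal_conductor_subset {Y 𝕜 : Type*} [TopologicalSpace Y]
    [CompactSpace Y] [T2Space Y] [RCLike 𝕜] {A : Subalgebra 𝕜 C(Y, 𝕜)}
    (hA : IsClosed (A : Set C(Y, 𝕜))) :
    (ContinuousMap.idealOfSet 𝕜 (ContinuousMap.setOfIdeal A.conductor) : Set C(Y, 𝕜)) ⊆ A := by
  rw [ContinuousMap.idealOfSet_ofIdeal_eq_closure, Ideal.coe_closure]
  exact closure_minimal A.conductor_subset hA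

theorem ContinuousMap.mem_of_forall_exists_norm_sub_le {Y E : Type*} [TopologicalSpace Y]
    [CompactSpace Y] [SeminormedAddCommGroup E] {S : Set C(Y, E)} (hS : IsClosed S)
    {g : C(Y, E)} (hg : ∀ ε > 0, ∃ a ∈ S, ∀ y, ‖g y - a y‖ ≤ ε) : g ∈ S := by
  refine hS.closure_eq ▸ Metric.mem_closure_iff.2 fun ε hε => ?_
  obtain ⟨a, ha, hga⟩ := hg (ε / 2) (half_pos hε)
  refine ⟨a, ha, (ContinuousMap.dist_le (half_pos hε).le).2 (fun y => ?_) |>.trans_lt ?_⟩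
  · simpa only [dist_eq_norm] using hga y
  · linarith

theorem ContinuousMap.exists_norm_sub_le_eq_zero_of_norm_le {Y E : Type*} [TopologicalSpace Y]
    [SeminormedAddCommGroup E] [NormedSpace ℝ E] (k : C(Y, E)) {ε : ℝ} (hε : 0 < ε) :
    ∃ k' : C(Y, E), (∀ y, ‖k y - k' y‖ ≤ ε) ∧ ∀ y, ‖k y‖ ≤ ε → k' y = 0 := by
  have hm : ∀ y, 0 < max ε ‖k y‖ := fun y => lt_max_of_lt_left hε
  refine ⟨⟨fun y => (1 - ε / max ε ‖k y‖) • k y, ?_⟩, fun y => ?_, fun y hy => ?_⟩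
  · exact (continuous_const.sub (continuous_const.div (continuous_const.max k.continuous.norm)
      fun y => (hm y).ne')).smul k.continuous
  · have hc : 0 ≤ ε / max ε ‖k y‖ := div_nonneg hε.le (hm y).le
    calc ‖k y - (1 - ε / max ε ‖k y‖) • k y‖ = ε / max ε ‖k y‖ * ‖k y‖ := by
          rw [sub_smul, one_smul, sub_sub_cancel, norm_smul, Real.norm_of_nonneg hc]
      _ ≤ ε := by
          rw [div_mul_eq_mul_div, div_le_iff₀ (hm y)]
          exact mul_le_mul_of_nonneg_left (le_max_right _ _) hε.le
  · change (1 - ε / max ε ‖k y‖) • k y = 0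
    rw [max_eq_left hy, div_self hε.ne', sub_self, zero_smul]

namespace Pervasive

variable {Y : Type} [TopologicalSpace Y] [CompactSpace Y] {A : Subalgebra ℂ C(Y, ℂ)}

theorem exists_forall_norm_sub_lt (hA : Pervasive A) {F : Set Y} (hF : IsClosed F)
    (hFu : F ≠ univ) (h : C(Y, ℂ)) {ε : ℝ} (hε : 0 < ε) :
    ∃ a ∈ A, ∀ x ∈ F, ‖h x - a x‖ < ε := by
  rcases F.eq_empty_or_nonempty with rfl | hFne
  · exact ⟨0, zero_mem A, fun x hx => hx.elim⟩
  have : CompactSpace F := isCompact_iff_compactSpace.1 hF.isCompact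
  obtain ⟨_, hball, a, ha, rfl⟩ := Metric.dense_iff.1 (hA F hF hFne hFu) (h.restrict F) ε hε
  refine ⟨a, ha, fun x hx => ?_⟩
  calc ‖h x - a x‖ = dist (a.restrict F ⟨x, hx⟩) (h.restrict F ⟨x, hx⟩) := by
        rw [dist_eq_norm, norm_sub_rev]; rfl
    _ ≤ dist (a.restrict F) (h.restrict F) := ContinuousMap.dist_apply_le_dist _
    _ < ε := hball

theorem mem_conductor_of_eqOn_zero (hA : Pervasive A) (hAc : IsClosed (A : Set C(Y, ℂ)))
    {f : C(Y, ℂ)} (hf : f ∈ A) {U : Set Y} (hU : IsOpen U) (hUne : U.Nonempty)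
    (hfU : ∀ x ∈ U, f x = 0) : f ∈ A.conductor := by
  intro h
  refine ContinuousMap.mem_of_forall_exists_norm_sub_le hAc fun ε hε => ?_
  have hδ : 0 < ε / (‖f‖ + 1) := by positivity
  obtain ⟨a, ha, hha⟩ := hA.exists_forall_norm_sub_lt hU.isClosed_compl
    (compl_ne_univ.2 hUne) h hδ
  refine ⟨f * a, mul_mem hf ha, fun x => ?_⟩
  rw [ContinuousMap.mul_apply, ContinuousMap.mul_apply, ← mul_sub, norm_mul]
  by_cases hx : x ∈ U
  · rw [hfU x hx, norm_zero, zero_mul]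
    exact hε.le
  calc ‖f x‖ * ‖h x - a x‖ ≤ ‖f‖ * (ε / (‖f‖ + 1)) :=
        mul_le_mul (f.norm_coe_le_norm x) (hha x hx).le (norm_nonneg _) (norm_nonneg _)
    _ ≤ ε := by
        rw [mul_div_assoc', div_le_iff₀ (by positivity)]
        nlinarith [norm_nonneg f]

theorem eq_top_of_conductor_ne_bot [T2Space Y] (hA : Pervasive A)
    (hAc : IsClosed (A : Set C(Y, ℂ))) (hJ : A.conductor ≠ ⊥) : A = ⊤ := by
  set E := (ContinuousMap.setOfIdeal A.conductor)ᶜ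
  have hEu : E ≠ univ := by
    obtain ⟨g, hg, hg0⟩ := (Submodule.ne_bot_iff _).1 hJ
    obtain ⟨x, hx⟩ := DFunLike.ne_iff.1 hg0
    exact compl_ne_univ.2 ⟨x, ContinuousMap.mem_setOfIdeal.2 ⟨g, hg, hx⟩⟩
  have hvanish : ∀ k : C(Y, ℂ), (∀ x ∈ E, k x = 0) → k ∈ A := fun k hk =>
    A.idealOfSet_setOfIdeal_conductor_subset hAc (ContinuousMap.mem_idealOfSet.2 hk)
  refine eq_top_iff.2 fun h _ => ContinuousMap.mem_of_forall_exists_norm_sub_le hAc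
    fun ε hε => ?_
  obtain ⟨a, ha, hha⟩ := hA.exists_forall_norm_sub_lt
    (ContinuousMap.setOfIdeal_open _).isClosed_compl hEu h hε
  obtain ⟨k, hk, hk0⟩ := (h - a).exists_norm_sub_le_eq_zero_of_norm_le hε
  refine ⟨a + k, add_mem ha (hvanish k fun x hx => hk0 x (hha x hx).le), fun x => ?_⟩
  simpa only [ContinuousMap.add_apply, ContinuousMap.sub_apply, sub_add_eq_sub_sub] using hk x

end Pervasive

theorem stmt_0 (A : Subalgebra ℂ C(X, ℂ))
    (hclosed : IsClosed (A : Set C(X, ℂ)))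
    (hperv : Pervasive A) (hproper : A ≠ ⊤) :
    ∀ f ∈ A, ∀ U : Set X, IsOpen U → U.Nonempty → (∀ x ∈ U, f x = 0) → f = 0 := by
  intro f hf U hU hUne hfU
  by_contra hf0
  refine hproper (hperv.eq_top_of_conductor_ne_bot hclosed ((Submodule.ne_bot_iff _).2 ?_))
  exact ⟨f, hperv.mem_conductor_of_eqOn_zero hclosed hf hU hUne hfU, hf0⟩
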